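/- arXiv:1310.2381 — 4 statements merged into one kernel-verified Lean document; each statement's English description precedes it below -/
import Mathlib

section
/- Let A₁,…,A_k be r×r matrices over F₂ with each A_i invertible and A_i + A_j invertible for i ≠ j, and let X be any r×r matrix over F₂. For i ∈ [k] let z_i be the number of zero columns of I + X·A_i, and let z_{k+1} be the number of zero columns of X. Then z_i + z_j ≤ r for all distinct i, j ∈ [k+1]. -/
/-!
A zero column `j` of `M` puts the basis vector `e j` into `ker M`, so `z i` is at most the
dimension of `ker (1 + X * A i)`, and `z (k + 1)` at most that of `ker X`. Multiplication by
`A i` maps `ker (1 + X * A i)` injectively into `ker (1 + A i * X)`, since `u = -X (A u)` there.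
These last kernels are independent of each other and of `ker X`: a common vector `v` of
`ker (1 + A i * X)` and `ker (1 + A j * X)` has `(A i - A j) (X v) = 0`, so `X v = 0` and
`v = -A i (X v) = 0`. Two independent subspaces of `F₂ʳ` have dimensions adding up to at most `r`.
-/

/-- Number of zero columns of a square matrix over `ZMod 2`. -/
def zeroColCount {r : ℕ} (M : Matrix (Fin r) (Fin r) (ZMod 2)) : ℕ :=
  (Finset.univ.filter (fun j : Fin r => ∀ i, M i j = 0)).card

open Module

namespace Matrix

section Field

variable {K n : Type*} [Field K] [Fintype n] [DecidableEq n]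

theorem card_zeroCols_le_finrank_ker (M : Matrix n n K) [DecidablePred fun j => ∀ i, M i j = 0] :
    (Finset.univ.filter (fun j : n => ∀ i, M i j = 0)).card ≤
      finrank K (LinearMap.ker M.mulVecLin) := by
  let e : {j // ∀ i, M i j = 0} → LinearMap.ker M.mulVecLin := fun j =>
    ⟨Pi.single j.1 1, by ext i; simp [j.2 i]⟩
  have he : LinearIndependent K e :=
    LinearIndependent.of_comp (LinearMap.ker M.mulVecLin).subtype <| by
      simpa [e, Function.comp_def] using
        (Pi.basisFun K n).linearIndependent.comp _ Subtype.val_injective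
  simpa [Fintype.card_subtype] using he.fintype_card_le_finrank

theorem finrank_ker_one_add_mul_le_swap (A X : Matrix n n K) :
    finrank K (LinearMap.ker (1 + X * A).mulVecLin) ≤
      finrank K (LinearMap.ker (1 + A * X).mulVecLin) := by
  have hmaps : ∀ u ∈ LinearMap.ker (1 + X * A).mulVecLin,
      A.mulVecLin u ∈ LinearMap.ker (1 + A * X).mulVecLin := by
    intro u hu
    simp only [LinearMap.mem_ker, mulVecLin_apply, add_mulVec, one_mulVec,
      ← mulVec_mulVec] at hu ⊢
    rw [← mulVec_add, hu, mulVec_zero]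
  refine LinearMap.finrank_le_finrank_of_injective (f := A.mulVecLin.restrict hmaps) ?_
  rw [← LinearMap.ker_eq_bot, eq_bot_iff]
  rintro ⟨u, hu⟩ hAu
  replace hAu : A *ᵥ u = 0 := congrArg Subtype.val hAu
  have hu0 : u = 0 := by
    simpa [add_mulVec, ← mulVec_mulVec, hAu] using hu
  simp [hu0]

end Field

section CommRing

variable {R n : Type*} [CommRing R] [Fintype n] [DecidableEq n]

theorem disjoint_ker_one_add_mul_of_isUnit_sub {A B : Matrix n n R} (X : Matrix n n R)
    (hAB : IsUnit (A - B)) :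
    Disjoint (LinearMap.ker (1 + A * X).mulVecLin) (LinearMap.ker (1 + B * X).mulVecLin) := by
  rw [Submodule.disjoint_def]
  intro v hA hB
  simp only [LinearMap.mem_ker, mulVecLin_apply, add_mulVec, one_mulVec,
    ← mulVec_mulVec] at hA hB
  have hXv : X *ᵥ v = 0 := by
    apply mulVec_injective_of_isUnit hAB
    rw [sub_mulVec, mulVec_zero]
    linear_combination hA - hB
  rwa [hXv, mulVec_zero, add_zero] at hA

theorem disjoint_ker_one_add_mul_ker (A X : Matrix n n R) :
    Disjoint (LinearMap.ker (1 + A * X).mulVecLin) (LinearMap.ker X.mulVecLin) := by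
  rw [Submodule.disjoint_def]
  intro v hA hX
  simp only [LinearMap.mem_ker, mulVecLin_apply, add_mulVec, one_mulVec,
    ← mulVec_mulVec] at hA hX
  rwa [hX, mulVec_zero, add_zero] at hA

end CommRing

end Matrix

open Matrix in
theorem stmt2_general {r k : ℕ} (A : Fin k → Matrix (Fin r) (Fin r) (ZMod 2))
    (hAA : ∀ i j, i ≠ j → IsUnit (A i + A j))
    (X : Matrix (Fin r) (Fin r) (ZMod 2))
    (z : Fin (k + 1) → ℕ)
    (hz : ∀ i : Fin k, z i.castSucc = zeroColCount (1 + X * A i))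
    (hzlast : z (Fin.last k) = zeroColCount X) :
    ∀ i j : Fin (k + 1), i ≠ j → z i + z j ≤ r := by
  obtain ⟨W, hWcast, hWlast⟩ : ∃ W : Fin (k + 1) → Submodule (ZMod 2) (Fin r → ZMod 2),
      (∀ a, W a.castSucc = LinearMap.ker (1 + A a * X).mulVecLin) ∧
        W (Fin.last k) = LinearMap.ker X.mulVecLin :=
    ⟨Fin.snoc _ _, fun a => Fin.snoc_castSucc _ _ a, Fin.snoc_last _ _⟩
  have hzW : ∀ i, z i ≤ finrank (ZMod 2) (W i) := by
    intro i
    induction i using Fin.lastCases with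
    | last => rw [hzlast, hWlast]; exact card_zeroCols_le_finrank_ker X
    | cast a =>
      rw [hz a, hWcast a]
      exact (card_zeroCols_le_finrank_ker _).trans (finrank_ker_one_add_mul_le_swap (A a) X)
  have hW : ∀ i j, i ≠ j → Disjoint (W i) (W j) := by
    intro i j hij
    induction i using Fin.lastCases with
    | last =>
      induction j using Fin.lastCases with
      | last => exact absurd rfl hij
      | cast b => rw [hWlast, hWcast b]; exact (disjoint_ker_one_add_mul_ker (A b) X).symm
    | cast a =>
      induction j using Fin.lastCases with
      | last => rw [hWlast, hWcast a]; exact disjoint_ker_one_add_mul_ker (A a) X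
      | cast b =>
        have hsub : A a - A b = A a + A b := by
          ext i j
          exact CharTwo.sub_eq_add (A a i j) (A b i j)
        rw [hWcast a, hWcast b]
        refine disjoint_ker_one_add_mul_of_isUnit_sub X ?_
        rw [hsub]
        exact hAA a b (ne_of_apply_ne Fin.castSucc hij)
  intro i j hij
  calc z i + z j ≤ finrank (ZMod 2) (W i) + finrank (ZMod 2) (W j) := add_le_add (hzW i) (hzW j)
    _ ≤ finrank (ZMod 2) (Fin r → ZMod 2) :=
      Submodule.finrank_add_finrank_le_of_disjoint (hW i j hij)
    _ = r := by simp

theorem stmt2 {r k : ℕ} (A : Fin k → Matrix (Fin r) (Fin r) (ZMod 2))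
    (hA : ∀ i, IsUnit (A i))
    (hAA : ∀ i j, i ≠ j → IsUnit (A i + A j))
    (X : Matrix (Fin r) (Fin r) (ZMod 2))
    (z : Fin (k + 1) → ℕ)
    (hz : ∀ i : Fin k, z i.castSucc = zeroColCount (1 + X * A i))
    (hzlast : z (Fin.last k) = zeroColCount X) :
    ∀ i j : Fin (k + 1), i ≠ j → z i + z j ≤ r :=
  stmt2_general A hAA X z hz hzlast
end

section
/- Let A₁,…,A_k be r×r matrices over F₂ such that each A_i is invertible and A_i + A_j is invertible for all i ≠ j, with k ≥ 2. Then for any r×r matrix X over F₂, the total number of zero columns of the r×(k+1)r matrix [I+XA₁ | I+XA₂ | ⋯ | I+XA_k | X] is at most (k+1)r/2. -/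
open Matrix

section rank

variable {K n : Type*} [Field K] [Fintype n]

theorem Matrix.rank_add_le {m : Type*} [Fintype m] (M N : Matrix m n K) :
    (M + N).rank ≤ M.rank + N.rank := by
  rw [rank, mulVecLin_add]
  exact (Submodule.finrank_mono (LinearMap.range_add_le _ _)).trans
    (Submodule.finrank_add_le_finrank_add_finrank _ _)

variable [DecidableEq n]

theorem Matrix.card_le_rank_add_rank {M N : Matrix n n K} (h : IsUnit (M + N)) :
    Fintype.card n ≤ M.rank + N.rank :=
  (rank_of_isUnit _ h).symm.le.trans (rank_add_le M N)

theorem Matrix.rank_one_add_mul {A : Matrix n n K} (hA : IsUnit A) (X : Matrix n n K) :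
    (1 + X * A).rank = (A⁻¹ + X).rank := by
  have hdet := (isUnit_iff_isUnit_det A).1 hA
  rw [← rank_mul_eq_left_of_isUnit_det A (A⁻¹ + X) hdet, add_mul, nonsing_inv_mul A hdet]

theorem Matrix.isUnit_inv_add_inv {A B : Matrix n n K} (hA : IsUnit A) (hB : IsUnit B)
    (hAB : IsUnit (A + B)) : IsUnit (A⁻¹ + B⁻¹) := by
  have hA' := (isUnit_iff_isUnit_det A).1 hA
  have hB' := (isUnit_iff_isUnit_det B).1 hB
  have hfactor : A⁻¹ + B⁻¹ = A⁻¹ * (A + B) * B⁻¹ := by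
    rw [mul_add, add_mul, nonsing_inv_mul A hA', mul_nonsing_inv_cancel_right B _ hB', one_mul,
      add_comm]
  rw [hfactor]
  exact ((isUnit_nonsing_inv_iff.2 hA).mul hAB).mul (isUnit_nonsing_inv_iff.2 hB)

variable [CharP K 2]

theorem Matrix.card_le_rank_one_add_mul_add_rank_one_add_mul {A B : Matrix n n K} (hA : IsUnit A)
    (hB : IsUnit B) (hAB : IsUnit (A + B)) (X : Matrix n n K) :
    Fintype.card n ≤ (1 + X * A).rank + (1 + X * B).rank := by
  rw [rank_one_add_mul hA, rank_one_add_mul hB]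
  refine card_le_rank_add_rank ?_
  rw [add_add_add_comm, ← two_smul K X, CharTwo.two_eq_zero, zero_smul, add_zero]
  exact isUnit_inv_add_inv hA hB hAB

theorem Matrix.card_le_rank_one_add_mul_add_rank {A : Matrix n n K} (hA : IsUnit A)
    (X : Matrix n n K) : Fintype.card n ≤ (1 + X * A).rank + X.rank := by
  rw [rank_one_add_mul hA]
  refine card_le_rank_add_rank ?_
  rw [add_assoc, ← two_smul K X, CharTwo.two_eq_zero, zero_smul, add_zero]
  exact isUnit_nonsing_inv_iff.2 hA

end rank

theorem zeroColCount_add_rank_le {r : ℕ} (M : Matrix (Fin r) (Fin r) (ZMod 2)) :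
    zeroColCount M + M.rank ≤ r := by
  have hrank : M.rank ≤ (Finset.univ.filter fun j : Fin r => ¬ ∀ i, M i j = 0).card := by
    rw [← rank_transpose]
    refine rank_le_card_of_support_subset _ _ fun j hj => ?_
    simp only [row_transpose, Function.mem_support, ne_eq, not_forall, Finset.coe_filter,
      Finset.mem_univ, true_and, Set.mem_ofPred_eq] at hj ⊢
    contrapose! hj
    exact funext hj
  have := Finset.card_filter_add_card_filter_not (s := Finset.univ) fun j : Fin r => ∀ i, M i j = 0
  simp only [Finset.card_univ, Fintype.card_fin] at this
  unfold zeroColCount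
  omega

theorem zeroColCount_add_zeroColCount_le {r : ℕ} {M N : Matrix (Fin r) (Fin r) (ZMod 2)}
    (h : r ≤ M.rank + N.rank) : zeroColCount M + zeroColCount N ≤ r := by
  have := zeroColCount_add_rank_le M
  have := zeroColCount_add_rank_le N
  omega

theorem two_mul_sum_le_of_add_le {m r : ℕ} (hm : 2 ≤ m) (z : Fin m → ℕ)
    (h : ∀ i j, i ≠ j → z i + z j ≤ r) : 2 * ∑ i, z i ≤ m * r := by
  obtain ⟨m, rfl⟩ : ∃ m', m = m' + 2 := ⟨m - 2, by omega⟩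
  have hshift : ∑ i, z (i + 1) = ∑ i, z i :=
    Fintype.sum_equiv (Equiv.addRight 1) _ _ fun _ => rfl
  calc 2 * ∑ i, z i = ∑ i, (z i + z (i + 1)) := by rw [Finset.sum_add_distrib, hshift, two_mul]
    _ ≤ ∑ _i : Fin (m + 2), r := Finset.sum_le_sum fun i _ => h _ _ (by simp)
    _ = (m + 2) * r := by simp

/-- The total number of zero columns of the concatenated matrix
`[I+XA₁ | ⋯ | I+XA_k | X]` is the sum of the zero-column counts of its blocks;
it is at most `(k+1)r/2`, i.e. twice it is at most `(k+1)r`. -/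
theorem stmt4 {r k : ℕ} (hk : 2 ≤ k) (A : Fin k → Matrix (Fin r) (Fin r) (ZMod 2))
    (hA : ∀ i, IsUnit (A i))
    (hAA : ∀ i j, i ≠ j → IsUnit (A i + A j))
    (X : Matrix (Fin r) (Fin r) (ZMod 2)) :
    2 * ((∑ i, zeroColCount (1 + X * A i)) + zeroColCount X) ≤ (k + 1) * r := by
  set z : Fin (k + 1) → ℕ := Fin.cons (zeroColCount X) fun i => zeroColCount (1 + X * A i)
  have hX : ∀ i, zeroColCount (1 + X * A i) + zeroColCount X ≤ r := fun i =>
    zeroColCount_add_zeroColCount_le <| by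
      simpa using card_le_rank_one_add_mul_add_rank (hA i) X
  have hz : ∀ i j, i ≠ j → z i + z j ≤ r := by
    intro i j hij
    induction i using Fin.cases with
    | zero =>
      induction j using Fin.cases with
      | zero => exact absurd rfl hij
      | succ l => simpa [z, add_comm] using hX l
    | succ i =>
      induction j using Fin.cases with
      | zero => simpa [z] using hX i
      | succ l =>
        exact zeroColCount_add_zeroColCount_le <| by
          simpa using card_le_rank_one_add_mul_add_rank_one_add_mul (hA i) (hA l)
            (hAA i l (by simpa using hij)) X
  have := two_mul_sum_le_of_add_le (by omega) z hz
  rwa [Fin.sum_univ_succ, add_comm] at this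
end

section
/- Let B₁,…,B_{k+1} be r×r matrices over F₂ such that B_i + B_j is invertible for all distinct i,j ∈ [k+1]. Define the 2r×2r matrices B'_i = diag(B_i + B_{k+1}, B_i + B_{k+1}) for i ∈ [k], B'_{k+1} = [[0, I_r],[0, 0]], and B'_{k+2} = [[0, 0],[I_r, 0]]. Then B'_i + B'_j is invertible for all distinct i, j ∈ [k+2]. -/
/-!
In characteristic 2, `(B_i + B_{k+1}) + (B_j + B_{k+1}) = B_i + B_j`, so the sum of two of the
block-diagonal `B'_i` is block diagonal with an invertible block. Adding `B'_{k+1}` or `B'_{k+2}`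
to a block-diagonal `B'_i` gives a block-triangular matrix with invertible diagonal blocks, and
`B'_{k+1} + B'_{k+2}` is the block swap, an involution.
-/

open Matrix

lemma Matrix.add_add_add_right_cancel_of_charTwo {m n R : Type*} [Ring R] [CharP R 2]
    (A B C : Matrix m n R) : (A + C) + (B + C) = A + B := by
  have hC : C + C = 0 := by ext; exact CharTwo.add_self_eq_zero _
  rw [add_add_add_comm, hC, add_zero]

lemma Matrix.fromBlocks_zero_one_one_zero_mul_self {n R : Type*} [Fintype n] [DecidableEq n]
    [Semiring R] :
    (fromBlocks 0 1 1 0 : Matrix (n ⊕ n) (n ⊕ n) R) * fromBlocks 0 1 1 0 = 1 := by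
  rw [fromBlocks_multiply, ← fromBlocks_one]
  simp

lemma Matrix.isUnit_fromBlocks_zero_one_one_zero {n R : Type*} [Fintype n] [DecidableEq n]
    [Semiring R] : IsUnit (fromBlocks 0 1 1 0 : Matrix (n ⊕ n) (n ⊕ n) R) :=
  ⟨⟨_, _, fromBlocks_zero_one_one_zero_mul_self, fromBlocks_zero_one_one_zero_mul_self⟩, rfl⟩

section BlockUnits

variable {n R : Type*} [Fintype n] [DecidableEq n] [CommRing R] {A : Matrix n n R}

lemma Matrix.isUnit_fromBlocks_add_fromBlocks_zero_one_zero_zero (hA : IsUnit A) :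
    IsUnit (fromBlocks A 0 0 A + fromBlocks 0 1 0 0) := by
  rw [fromBlocks_add, add_zero, zero_add, zero_add, isUnit_fromBlocks_zero₂₁]
  exact ⟨hA, hA⟩

lemma Matrix.isUnit_fromBlocks_add_fromBlocks_zero_zero_one_zero (hA : IsUnit A) :
    IsUnit (fromBlocks A 0 0 A + fromBlocks 0 0 1 0) := by
  rw [fromBlocks_add, add_zero, add_zero, zero_add, isUnit_fromBlocks_zero₁₂]
  exact ⟨hA, hA⟩

end BlockUnits

lemma Fin.exists_castSucc_castSucc_or_eq_or_eq_last {k : ℕ} (i : Fin (k + 2)) :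
    (∃ a : Fin k, i = a.castSucc.castSucc) ∨ i = (Fin.last k).castSucc ∨ i = Fin.last (k + 1) := by
  induction i using Fin.lastCases with
  | last => exact .inr (.inr rfl)
  | cast i =>
    induction i using Fin.lastCases with
    | last => exact .inr (.inl rfl)
    | cast a => exact .inl ⟨a, rfl⟩

theorem stmt7 {r k : ℕ} (B : Fin (k + 1) → Matrix (Fin r) (Fin r) (ZMod 2))
    (hB : ∀ i j : Fin (k + 1), i ≠ j → IsUnit (B i + B j))
    (B' : Fin (k + 2) → Matrix (Fin r ⊕ Fin r) (Fin r ⊕ Fin r) (ZMod 2))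
    (hB'₁ : ∀ i : Fin k, B' i.castSucc.castSucc =
      Matrix.fromBlocks (B i.castSucc + B (Fin.last k)) 0 0 (B i.castSucc + B (Fin.last k)))
    (hB'₂ : B' ⟨k, by omega⟩ = Matrix.fromBlocks 0 1 0 0)
    (hB'₃ : B' (Fin.last (k + 1)) = Matrix.fromBlocks 0 0 1 0) :
    ∀ i j : Fin (k + 2), i ≠ j → IsUnit (B' i + B' j) := by
  have hlast (a : Fin k) : IsUnit (B a.castSucc + B (Fin.last k)) :=
    hB _ _ (Fin.castSucc_lt_last a).ne
  have hsmall (a b : Fin k) (hab : a ≠ b) :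
      IsUnit (B' a.castSucc.castSucc + B' b.castSucc.castSucc) := by
    have hab' := hB _ _ (Fin.castSucc_injective _ |>.ne hab)
    rw [hB'₁, hB'₁, fromBlocks_add, add_add_add_right_cancel_of_charTwo, add_zero]
    exact isUnit_fromBlocks_zero₂₁.2 ⟨hab', hab'⟩
  have hsmall_mid (a : Fin k) : IsUnit (B' a.castSucc.castSucc + B' ⟨k, by omega⟩) := by
    rw [hB'₁, hB'₂]
    exact isUnit_fromBlocks_add_fromBlocks_zero_one_zero_zero (hlast a)
  have hsmall_last (a : Fin k) : IsUnit (B' a.castSucc.castSucc + B' (Fin.last (k + 1))) := by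
    rw [hB'₁, hB'₃]
    exact isUnit_fromBlocks_add_fromBlocks_zero_zero_one_zero (hlast a)
  have hmid_last : IsUnit (B' ⟨k, by omega⟩ + B' (Fin.last (k + 1))) := by
    rw [hB'₂, hB'₃, fromBlocks_add]
    simpa using isUnit_fromBlocks_zero_one_one_zero
  intro i j hij
  rcases i.exists_castSucc_castSucc_or_eq_or_eq_last with ⟨a, rfl⟩ | rfl | rfl <;>
    rcases j.exists_castSucc_castSucc_or_eq_or_eq_last with ⟨b, rfl⟩ | rfl | rfl
  · exact hsmall a b (by rintro rfl; exact hij rfl)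
  · exact hsmall_mid a
  · exact hsmall_last a
  · exact add_comm (B' _) _ ▸ hsmall_mid b
  · exact absurd rfl hij
  · exact hmid_last
  · exact add_comm (B' _) _ ▸ hsmall_last b
  · exact add_comm (B' _) _ ▸ hmid_last
  · exact absurd rfl hij
end

section
/- Let r be even and let B₁,…,B_{k+1} be r×r matrices over F₂ with B_i + B_j invertible for all i ≠ j. Suppose there exist sets R_i, C_i ⊆ [r] with |R_i| = |C_i| = r/2 for i ∈ [k+1] such that B_i|_{R_i, C_i^c} is invertible for each i and B_j|_{R_i, C_i^c} = 0 for all j ≠ i. Set d_{k+1} = Σ_{i=1}^k d_i and d_{k+2} = Σ_{i=1}^{k+1} B_i d_i, where each d_i ∈ F₂^r. Then for each i ∈ [k+1], the vector d_i is uniquely determined by the data {d_j|_{C_i} : j ∈ [k+1], j ≠ i} together with d_{k+2}|_{R_i}. Explicitly, d_i|_{C_i} = Σ_{j≠i, j∈[k+1]} d_j|_{C_i} and d_i|_{C_i^c} = (B_i|_{R_i,C_i^c})⁻¹ · (d_{k+2}|_{R_i} + Σ_{j=1}^{k+1} B_j|_{R_i,C_i} d_j|_{C_i}). -/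
/-!
Over a field of characteristic two the parity relation `d (k+1) = ∑ j ≤ k, d j` says that the
`d j` sum to zero, so each `d i` is the sum of the others, in particular on `C i`. For the
remaining coordinates, adding `∑ j, B j |_{R i, C i} d j |_{C i}` to the rows `R i` of
`∑ j, B j d j` leaves exactly `∑ j, B j |_{R i, (C i)ᶜ} d j |_{(C i)ᶜ}`, in which only the term
`j = i` survives; the left inverse of `B i |_{R i, (C i)ᶜ}` then returns `d i |_{(C i)ᶜ}`.
-/

open Finset Matrix

section CharTwo

variable {R : Type*} [Ring R] [CharP R 2]

theorem Fin.sum_univ_eq_zero_of_last_eq_sum {k : ℕ} {f : Fin (k + 1) → R}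
    (h : f (Fin.last k) = ∑ j : Fin k, f j.castSucc) : ∑ j, f j = 0 := by
  rw [Fin.sum_univ_castSucc, h, CharTwo.add_self_eq_zero]

theorem eq_sum_erase_of_sum_eq_zero {ι : Type*} [Fintype ι] [DecidableEq ι] {f : ι → R}
    (h : ∑ j, f j = 0) (i : ι) : f i = ∑ j ∈ univ.erase i, f j := by
  rw [← CharTwo.neg_eq (∑ j ∈ univ.erase i, f j), eq_neg_iff_add_eq_zero,
    add_sum_erase univ f (mem_univ i), h]

theorem sum_add_sum_subtype_eq_sum_subtype_compl {n : Type*} [Fintype n] [DecidableEq n]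
    (C : Finset n) (f : n → R) : ∑ y, f y + ∑ y : C, f y = ∑ y : ↥Cᶜ, f y := by
  rw [sum_coe_sort, sum_coe_sort, ← sum_add_sum_compl C f, add_comm (∑ y ∈ C, f y),
    add_assoc, CharTwo.add_self_eq_zero, add_zero]

end CharTwo

theorem sum_submatrix_mulVec_eq_single {ι m n p q R : Type*} [Fintype ι] [Fintype q]
    [NonUnitalNonAssocSemiring R] (B : ι → Matrix m n R) (ρ : p → m) (κ : q → n)
    (d : ι → n → R) (i : ι) (hzero : ∀ j, j ≠ i → (B j).submatrix ρ κ = 0) :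
    ∑ j, (B j).submatrix ρ κ *ᵥ (d j ∘ κ) = (B i).submatrix ρ κ *ᵥ (d i ∘ κ) :=
  Fintype.sum_eq_single i fun j hj => by rw [hzero j hj, zero_mulVec]

theorem stmt15_general {r k : ℕ}
    (B : Fin (k + 1) → Matrix (Fin r) (Fin r) (ZMod 2))
    (R C : Fin (k + 1) → Finset (Fin r))
    -- `Binv i` is a two-sided inverse of the submatrix `B i |_{R i, (C i)ᶜ}` :
    (Binv : ∀ i, Matrix {x // x ∈ (C i)ᶜ} {x // x ∈ R i} (ZMod 2))
    (hinv : ∀ i,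
      (B i).submatrix (fun a : {x // x ∈ R i} => (a : Fin r))
          (fun b : {x // x ∈ (C i)ᶜ} => (b : Fin r)) * Binv i = 1 ∧
      Binv i * (B i).submatrix (fun a : {x // x ∈ R i} => (a : Fin r))
          (fun b : {x // x ∈ (C i)ᶜ} => (b : Fin r)) = 1)
    (hzero : ∀ i j : Fin (k + 1), j ≠ i →
      (B j).submatrix (fun a : {x // x ∈ R i} => (a : Fin r))
        (fun b : {x // x ∈ (C i)ᶜ} => (b : Fin r)) = 0)
    -- data blocks: `d i` for `i ∈ [k]` arbitrary, `d (k+1)` the row parity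
    (d : Fin (k + 1) → Fin r → ZMod 2)
    (hd : d (Fin.last k) = ∑ j : Fin k, d j.castSucc) :
    ∀ i : Fin (k + 1),
      (∀ x ∈ C i, d i x = ∑ j ∈ Finset.univ.erase i, d j x) ∧
      (∀ x : {z // z ∈ (C i)ᶜ},
        d i x = ∑ z : {w // w ∈ R i}, Binv i x z *
          ((∑ j : Fin (k + 1), ∑ y : Fin r, B j (z : Fin r) y * d j y) +
           ∑ j : Fin (k + 1), ∑ y : {w // w ∈ C i},
             B j (z : Fin r) (y : Fin r) * d j y)) := by
  intro i
  refine ⟨fun x _ => eq_sum_erase_of_sum_eq_zero (Fin.sum_univ_eq_zero_of_last_eq_sum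
    (f := (d · x)) (by simpa using congrFun hd x)) i, fun x => ?_⟩
  set Bs := (B i).submatrix (fun a : {x // x ∈ R i} => (a : Fin r))
    (fun b : {x // x ∈ (C i)ᶜ} => (b : Fin r))
  have syndrome : (fun z : {w // w ∈ R i} =>
      (∑ j, ∑ y, B j z y * d j y) + ∑ j, ∑ y : {w // w ∈ C i}, B j z y * d j y) =
      Bs *ᵥ (d i ∘ Subtype.val) := by
    funext z
    simp only [← sum_add_distrib, sum_add_sum_subtype_eq_sum_subtype_compl]
    rw [← sum_submatrix_mulVec_eq_single B _ _ d i (hzero i), Finset.sum_apply]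
    rfl
  calc d i x = ((Binv i * Bs) *ᵥ (d i ∘ Subtype.val)) x := by rw [(hinv i).2, one_mulVec]; rfl
    _ = _ := by rw [← mulVec_mulVec, ← syndrome]; rfl

theorem stmt15 {r k : ℕ} (hr : Even r)
    (B : Fin (k + 1) → Matrix (Fin r) (Fin r) (ZMod 2))
    (hMDS : ∀ i j : Fin (k + 1), i ≠ j → IsUnit (B i + B j))
    (R C : Fin (k + 1) → Finset (Fin r))
    (hRcard : ∀ i, (R i).card = r / 2) (hCcard : ∀ i, (C i).card = r / 2)
    -- `Binv i` is a two-sided inverse of the submatrix `B i |_{R i, (C i)ᶜ}` :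
    (Binv : ∀ i, Matrix {x // x ∈ (C i)ᶜ} {x // x ∈ R i} (ZMod 2))
    (hinv : ∀ i,
      (B i).submatrix (fun a : {x // x ∈ R i} => (a : Fin r))
          (fun b : {x // x ∈ (C i)ᶜ} => (b : Fin r)) * Binv i = 1 ∧
      Binv i * (B i).submatrix (fun a : {x // x ∈ R i} => (a : Fin r))
          (fun b : {x // x ∈ (C i)ᶜ} => (b : Fin r)) = 1)
    (hzero : ∀ i j : Fin (k + 1), j ≠ i →
      (B j).submatrix (fun a : {x // x ∈ R i} => (a : Fin r))
        (fun b : {x // x ∈ (C i)ᶜ} => (b : Fin r)) = 0)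
    -- data blocks: `d i` for `i ∈ [k]` arbitrary, `d (k+1)` the row parity
    (d : Fin (k + 1) → Fin r → ZMod 2)
    (hd : d (Fin.last k) = ∑ j : Fin k, d j.castSucc) :
    ∀ i : Fin (k + 1),
      (∀ x ∈ C i, d i x = ∑ j ∈ Finset.univ.erase i, d j x) ∧
      (∀ x : {z // z ∈ (C i)ᶜ},
        d i x = ∑ z : {w // w ∈ R i}, Binv i x z *
          ((∑ j : Fin (k + 1), ∑ y : Fin r, B j (z : Fin r) y * d j y) +
           ∑ j : Fin (k + 1), ∑ y : {w // w ∈ C i},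
             B j (z : Fin r) (y : Fin r) * d j y)) :=
  stmt15_general B R C Binv hinv hzero d hd
end
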